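/- Let A₀,...,A_l and A'₀,...,A'_l be n×n real matrices, ε_A ≥ 0 and M ≥ 0 constants such that ‖A_i − A'_i‖ ≤ ε_A and ‖A'_i‖ ≤ M for all i, and let D > 0 and 0 = s₀ ≤ s₁ ≤ ... ≤ s_{k+1} = D be real numbers. Then for every k ≥ 0, ‖∏_{n=1}^{k+1} exp(A_{m_n}(s_n − s_{n−1})) − ∏_{n=1}^{k+1} exp(A'_{m_n}(s_n − s_{n−1}))‖ ≤ ε_A · (k+1) · D · exp(M·s_{k+1}) · exp(ε_A·D), for any choice of indices m_1,...,m_{k+1} ∈ {0,...,l}. -/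

import Mathlib

/-!
Write `δₙ = s (n + 1) - s n` and `Xₙ = δₙ • A (m (n + 1))`, `Yₙ = δₙ • A' (m (n + 1))`.
Telescoping the difference of the two ordered products gives a sum over `n` of terms
(product of `exp Xⱼ`, `j > n`) · (`exp Xₙ - exp Yₙ`) · (product of `exp Yⱼ`, `j < n`).
Since `‖Xₙ‖, ‖Yₙ‖ ≤ (M + ε_A) δₙ` and `‖exp Xₙ - exp Yₙ‖ ≤ ε_A δₙ e^{(M + ε_A) δₙ}`, the
`n`-th term is at most `ε_A δₙ e^{(M + ε_A) D}`, and the `δₙ` add up to `D`; this even gives the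
bound without the factor `k + 1`.

In a normed ring `‖1‖` may exceed `1`, so `‖exp x‖ ≤ e^{‖x‖}` can fail; exponentials are
therefore only bounded as multipliers, `‖exp x * z‖ ≤ e^{‖x‖} ‖z‖`.
-/

open NormedSpace

section PowBounds

variable {R : Type*} [SeminormedRing R]

lemma norm_pow_mul_le (x z : R) (n : ℕ) : ‖x ^ n * z‖ ≤ ‖x‖ ^ n * ‖z‖ := by
  rcases Nat.eq_zero_or_pos n with rfl | hn
  · simp
  · exact (norm_mul_le _ _).trans (by gcongr; exact norm_pow_le' x hn)

lemma norm_mul_pow_le (x z : R) (n : ℕ) : ‖z * x ^ n‖ ≤ ‖z‖ * ‖x‖ ^ n := by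
  rcases Nat.eq_zero_or_pos n with rfl | hn
  · simp
  · exact (norm_mul_le _ _).trans (by gcongr; exact norm_pow_le' x hn)

lemma norm_pow_succ_sub_pow_succ_le (x y : R) (n : ℕ) :
    ‖x ^ (n + 1) - y ^ (n + 1)‖ ≤ (n + 1) * ‖x - y‖ * max ‖x‖ ‖y‖ ^ n := by
  induction n with
  | zero => simp
  | succ n ih =>
    have hx : ‖x‖ ≤ max ‖x‖ ‖y‖ := le_max_left _ _
    have hy : ‖y‖ ≤ max ‖x‖ ‖y‖ := le_max_right _ _
    calc ‖x ^ (n + 2) - y ^ (n + 2)‖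
        = ‖x * (x ^ (n + 1) - y ^ (n + 1)) + (x - y) * y ^ (n + 1)‖ := by
          rw [mul_sub, sub_mul, sub_add_sub_cancel, ← pow_succ', ← pow_succ']
      _ ≤ ‖x‖ * ‖x ^ (n + 1) - y ^ (n + 1)‖ + ‖x - y‖ * ‖y‖ ^ (n + 1) :=
          norm_add_le_of_le (norm_mul_le _ _) (norm_mul_pow_le _ _ _)
      _ ≤ max ‖x‖ ‖y‖ * ((n + 1) * ‖x - y‖ * max ‖x‖ ‖y‖ ^ n)
          + ‖x - y‖ * max ‖x‖ ‖y‖ ^ (n + 1) := by gcongr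
      _ = (↑(n + 1) + 1) * ‖x - y‖ * max ‖x‖ ‖y‖ ^ (n + 1) := by push_cast; ring

end PowBounds

lemma Real.hasSum_pow_div_factorial (r : ℝ) :
    HasSum (fun n => r ^ n / n.factorial) (Real.exp r) := by
  rw [Real.exp_eq_exp_ℝ]
  exact expSeries_div_hasSum_exp r

section ExpBounds

variable {𝔸 : Type*} [NormedRing 𝔸] [NormedAlgebra ℝ 𝔸] [CompleteSpace 𝔸]

lemma norm_exp_mul_le (x z : 𝔸) : ‖exp x * z‖ ≤ Real.exp ‖x‖ * ‖z‖ := by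
  rw [exp_eq_tsum ℝ, ← (expSeries_summable' x).tsum_mul_right]
  refine tsum_of_norm_bounded ((Real.hasSum_pow_div_factorial ‖x‖).mul_right ‖z‖) fun n => ?_
  rw [smul_mul_assoc, norm_smul, Real.norm_of_nonneg (by positivity), div_mul_eq_mul_div,
    inv_mul_eq_div]
  gcongr
  exact norm_pow_mul_le x z n

lemma norm_mul_exp_le (z x : 𝔸) : ‖z * exp x‖ ≤ ‖z‖ * Real.exp ‖x‖ := by
  rw [exp_eq_tsum ℝ, ← (expSeries_summable' x).tsum_mul_left]
  refine tsum_of_norm_bounded ((Real.hasSum_pow_div_factorial ‖x‖).mul_left ‖z‖) fun n => ?_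
  rw [mul_smul_comm, norm_smul, Real.norm_of_nonneg (by positivity), ← mul_div_assoc,
    inv_mul_eq_div]
  gcongr
  exact norm_mul_pow_le x z n

lemma norm_exp_sub_exp_le (x y : 𝔸) :
    ‖exp x - exp y‖ ≤ ‖x - y‖ * Real.exp (max ‖x‖ ‖y‖) := by
  rw [exp_eq_tsum ℝ, ← (expSeries_summable' x).tsum_sub (expSeries_summable' y),
    ((expSeries_summable' x).sub (expSeries_summable' y)).tsum_eq_zero_add]
  simp only [pow_zero, sub_self, zero_add]
  refine tsum_of_norm_bounded
    ((Real.hasSum_pow_div_factorial (max ‖x‖ ‖y‖)).mul_left ‖x - y‖) fun n => ?_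
  rw [← smul_sub, norm_smul, Real.norm_of_nonneg (by positivity)]
  calc ((n + 1).factorial : ℝ)⁻¹ * ‖x ^ (n + 1) - y ^ (n + 1)‖
      ≤ ((n + 1).factorial : ℝ)⁻¹ * ((n + 1) * ‖x - y‖ * max ‖x‖ ‖y‖ ^ n) := by
        gcongr; exact norm_pow_succ_sub_pow_succ_le x y n
    _ = ‖x - y‖ * (max ‖x‖ ‖y‖ ^ n / n.factorial) := by
        rw [Nat.factorial_succ]; push_cast; field_simp

end ExpBounds

namespace List

variable {ι R : Type*} [SeminormedRing R] {c : ι → ℝ}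

lemma norm_mul_prod_map_le (l : List ι) {g : ι → R} (hc : ∀ i ∈ l, 0 ≤ c i)
    (hg : ∀ i ∈ l, ∀ z, ‖z * g i‖ ≤ ‖z‖ * c i) (z : R) :
    ‖z * (l.map g).prod‖ ≤ ‖z‖ * (l.map c).prod := by
  induction l generalizing z with
  | nil => simp
  | cons a l ih =>
    have hc' : ∀ i ∈ l, 0 ≤ c i := fun i hi => hc i (mem_cons_of_mem a hi)
    have hl := ih hc' (fun i hi => hg i (mem_cons_of_mem a hi))
    calc ‖z * ((a :: l).map g).prod‖ = ‖z * g a * (l.map g).prod‖ := by simp [mul_assoc]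
      _ ≤ ‖z * g a‖ * (l.map c).prod := hl _
      _ ≤ ‖z‖ * c a * (l.map c).prod := by
          gcongr
          · exact prod_nonneg (forall_mem_map.2 hc')
          · exact hg a mem_cons_self z
      _ = ‖z‖ * ((a :: l).map c).prod := by simp [mul_assoc]

lemma norm_prod_map_sub_prod_map_le (l : List ι) {f g : ι → R} {d : ι → ℝ}
    (hc : ∀ i ∈ l, 0 ≤ c i) (hf : ∀ i ∈ l, ∀ z, ‖f i * z‖ ≤ c i * ‖z‖)
    (hg : ∀ i ∈ l, ∀ z, ‖z * g i‖ ≤ ‖z‖ * c i) (hfg : ∀ i ∈ l, ‖f i - g i‖ ≤ d i * c i) :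
    ‖(l.map f).prod - (l.map g).prod‖ ≤ (l.map d).sum * (l.map c).prod := by
  induction l with
  | nil => simp
  | cons a l ih =>
    have hc' : ∀ i ∈ l, 0 ≤ c i := fun i hi => hc i (mem_cons_of_mem a hi)
    have hg' : ∀ i ∈ l, ∀ z, ‖z * g i‖ ≤ ‖z‖ * c i := fun i hi => hg i (mem_cons_of_mem a hi)
    have hl := ih hc' (fun i hi => hf i (mem_cons_of_mem a hi)) hg'
      (fun i hi => hfg i (mem_cons_of_mem a hi))
    calc ‖((a :: l).map f).prod - ((a :: l).map g).prod‖
        = ‖f a * ((l.map f).prod - (l.map g).prod) + (f a - g a) * (l.map g).prod‖ := by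
          simp only [map_cons, prod_cons]; noncomm_ring
      _ ≤ c a * ((l.map d).sum * (l.map c).prod) + ‖f a - g a‖ * (l.map c).prod :=
          norm_add_le_of_le ((hf a mem_cons_self _).trans (by gcongr; exact hc a mem_cons_self))
            (norm_mul_prod_map_le l hc' hg' _)
      _ ≤ c a * ((l.map d).sum * (l.map c).prod) + d a * c a * (l.map c).prod := by
          gcongr
          · exact prod_nonneg (forall_mem_map.2 hc')
          · exact hfg a mem_cons_self
      _ = ((a :: l).map d).sum * ((a :: l).map c).prod := by
          simp only [map_cons, sum_cons, prod_cons]; ring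

end List

lemma norm_prod_exp_sub_prod_exp_le {ι 𝔸 : Type*} [NormedRing 𝔸] [NormedAlgebra ℝ 𝔸]
    [CompleteSpace 𝔸] (l : List ι) {X Y : ι → 𝔸} {a d : ι → ℝ}
    (hX : ∀ i ∈ l, ‖X i‖ ≤ a i) (hY : ∀ i ∈ l, ‖Y i‖ ≤ a i)
    (hXY : ∀ i ∈ l, ‖X i - Y i‖ ≤ d i) :
    ‖(l.map fun i => exp (X i)).prod - (l.map fun i => exp (Y i)).prod‖ ≤
      (l.map d).sum * Real.exp (l.map a).sum := by
  rw [Real.exp_list_sum, List.map_map]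
  refine l.norm_prod_map_sub_prod_map_le (fun i _ => (Real.exp_pos _).le)
    (fun i hi z => (norm_exp_mul_le _ z).trans
      (mul_le_mul_of_nonneg_right (Real.exp_le_exp.2 (hX i hi)) (norm_nonneg z)))
    (fun i hi z => (norm_mul_exp_le z _).trans
      (mul_le_mul_of_nonneg_left (Real.exp_le_exp.2 (hY i hi)) (norm_nonneg z)))
    (fun i hi => (norm_exp_sub_exp_le _ _).trans ?_)
  exact mul_le_mul (hXY i hi) (Real.exp_le_exp.2 (max_le (hX i hi) (hY i hi)))
    (Real.exp_pos _).le ((norm_nonneg _).trans (hXY i hi))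

lemma List.sum_map_range_sub {G : Type*} [AddCommGroup G] (s : ℕ → G) (n : ℕ) :
    ((List.range n).map fun i => s (i + 1) - s i).sum = s n - s 0 := by
  induction n with
  | zero => simp
  | succ n ih => rw [List.range_succ, List.map_append, List.sum_append, ih]; simp

theorem stmt_3_general {𝔸 : Type*} [NormedRing 𝔸] [NormedAlgebra ℝ 𝔸] [CompleteSpace 𝔸]
    {l k : ℕ} (A A' : Fin (l + 1) → 𝔸) (ε_A M D : ℝ)
    (hε : 0 ≤ ε_A)
    (hA : ∀ i, ‖A i - A' i‖ ≤ ε_A) (hA' : ∀ i, ‖A' i‖ ≤ M)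
    (hD : 0 < D) (s : ℕ → ℝ) (hs0 : s 0 = 0)
    (hmono : ∀ i ≤ k, s i ≤ s (i + 1)) (hsD : s (k + 1) = D)
    (m : ℕ → Fin (l + 1)) :
    ‖((List.range (k + 1)).reverse.map
        (fun n => exp ((s (n + 1) - s n) • A (m (n + 1))))).prod -
      ((List.range (k + 1)).reverse.map
        (fun n => exp ((s (n + 1) - s n) • A' (m (n + 1))))).prod‖ ≤
      ε_A * (k + 1) * D * Real.exp (M * s (k + 1)) * Real.exp (ε_A * D) := by
  set L := (List.range (k + 1)).reverse
  have hδ : ∀ n ∈ L, 0 ≤ s (n + 1) - s n := fun n hn =>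
    sub_nonneg.2 (hmono n (Nat.lt_succ_iff.1 (List.mem_range.1 (List.mem_reverse.1 hn))))
  have hsum : (L.map fun n => s (n + 1) - s n).sum = D := by
    rw [List.map_reverse, List.sum_reverse, List.sum_map_range_sub, hs0, hsD, sub_zero]
  have hA_le : ∀ i, ‖A i‖ ≤ M + ε_A := fun i =>
    (norm_le_norm_add_norm_sub' _ (A' i)).trans (add_le_add (hA' i) (hA i))
  calc _ ≤ (L.map fun n => ε_A * (s (n + 1) - s n)).sum *
        Real.exp (L.map fun n => (M + ε_A) * (s (n + 1) - s n)).sum := by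
        refine norm_prod_exp_sub_prod_exp_le L (fun n hn => ?_) (fun n hn => ?_) (fun n hn => ?_)
        · rw [norm_smul_of_nonneg (hδ n hn), mul_comm]; gcongr; exacts [hδ n hn, hA_le _]
        · rw [norm_smul_of_nonneg (hδ n hn), mul_comm]; gcongr
          exacts [hδ n hn, (hA' _).trans (le_add_of_nonneg_right hε)]
        · rw [← smul_sub, norm_smul_of_nonneg (hδ n hn), mul_comm]; gcongr; exacts [hδ n hn, hA _]
    _ = 1 * (ε_A * D * Real.exp (M * s (k + 1)) * Real.exp (ε_A * D)) := by
        rw [List.sum_map_mul_left, List.sum_map_mul_left, hsum, hsD, add_mul, Real.exp_add]; ring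
    _ ≤ (k + 1) * (ε_A * D * Real.exp (M * s (k + 1)) * Real.exp (ε_A * D)) := by
        gcongr; linarith [(Nat.cast_nonneg k : (0 : ℝ) ≤ k)]
    _ = _ := by ring

/-- bound on the difference of ordered products of matrix exponentials
(in a real Banach algebra, e.g. n×n matrices with a submultiplicative norm; larger
indices multiply on the left). -/
theorem stmt_3 {𝔸 : Type*} [NormedRing 𝔸] [NormedAlgebra ℝ 𝔸] [CompleteSpace 𝔸]
    {l k : ℕ} (A A' : Fin (l + 1) → 𝔸) (ε_A M D : ℝ)
    (hε : 0 ≤ ε_A) (hM : 0 ≤ M)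
    (hA : ∀ i, ‖A i - A' i‖ ≤ ε_A) (hA' : ∀ i, ‖A' i‖ ≤ M)
    (hD : 0 < D) (s : ℕ → ℝ) (hs0 : s 0 = 0)
    (hmono : ∀ i ≤ k, s i ≤ s (i + 1)) (hsD : s (k + 1) = D)
    (m : ℕ → Fin (l + 1)) :
    ‖((List.range (k + 1)).reverse.map
        (fun n => exp ((s (n + 1) - s n) • A (m (n + 1))))).prod -
      ((List.range (k + 1)).reverse.map
        (fun n => exp ((s (n + 1) - s n) • A' (m (n + 1))))).prod‖ ≤
      ε_A * (k + 1) * D * Real.exp (M * s (k + 1)) * Real.exp (ε_A * D) :=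
  stmt_3_general A A' ε_A M D hε hA hA' hD s hs0 hmono hsD m
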